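/- For a jointly convex loss l, a single application of Jensen's inequality yields r_k(f,D) ≤ r_{k-1}(f,D), where r_k is the expected batched risk of size k: specifically, E[l((1/k)∑_{i=1}^k u_i, (1/k)∑_{i=1}^k v_i)] ≤ E[l((1/(k-1))∑_{i=1}^{k-1} u_i, (1/(k-1))∑_{i=1}^{k-1} v_i)] for i.i.d. real-valued pairs (u_i, v_i). -/

import Mathlib

/-!
Deleting one of the `n + 1` samples and averaging the remaining `n` gives `n + 1` leave-one-out
means whose own mean is the full sample mean. Jensen's inequality bounds the loss of the full mean
by the mean of the losses of the leave-one-out means, and since the samples are i.i.d. each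
leave-one-out mean has the law of a mean of `n` samples.
-/

open MeasureTheory Finset

noncomputable def sampleMean {E : Type*} [AddCommGroup E] [Module ℝ E] {m : ℕ}
    (w : Fin m → E) : E :=
  (m : ℝ)⁻¹ • ∑ i, w i

lemma Fin.sum_sum_succAbove {M : Type*} [AddCommGroup M] {n : ℕ} (w : Fin (n + 1) → M) :
    ∑ j : Fin (n + 1), ∑ t, w (j.succAbove t) = n • ∑ i, w i := by
  have hdrop (j : Fin (n + 1)) : ∑ t, w (j.succAbove t) = ∑ i, w i - w j := by
    rw [Fin.sum_univ_succAbove w j, add_sub_cancel_left]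
  simp only [hdrop, sum_sub_distrib, sum_const, succ_nsmul, add_sub_cancel_right]

section SampleMean

variable {E : Type*} [AddCommGroup E] [Module ℝ E]

lemma sampleMean_const {m : ℕ} [NeZero m] (x : E) : sampleMean (fun _ : Fin m => x) = x := by
  rw [sampleMean, sum_const, card_univ, Fintype.card_fin, ← Nat.cast_smul_eq_nsmul ℝ, smul_smul,
    inv_mul_cancel₀ (Nat.cast_ne_zero.mpr (NeZero.ne m)), one_smul]

lemma sampleMean_sampleMean_succAbove {n : ℕ} (hn : 0 < n) (w : Fin (n + 1) → E) :
    sampleMean (fun j => sampleMean fun t => w (j.succAbove t)) = sampleMean w := by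
  have hn' : (n : ℝ) ≠ 0 := by positivity
  simp only [sampleMean, ← smul_sum, Fin.sum_sum_succAbove, ← Nat.cast_smul_eq_nsmul ℝ, smul_smul,
    inv_mul_cancel₀ hn', mul_one]

lemma ConvexOn.map_sampleMean_le {f : E → ℝ} (hf : ConvexOn ℝ Set.univ f) {m : ℕ} [NeZero m]
    (w : Fin m → E) : f (sampleMean w) ≤ sampleMean fun i => f (w i) := by
  have hm : (0 : ℝ) < m := by simp [Nat.pos_of_neZero]
  have := hf.map_sum_le (t := univ) (w := fun _ => (m : ℝ)⁻¹) (p := w)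
    (fun _ _ => by positivity) (by simp [hm.ne']) (fun _ _ => Set.mem_univ _)
  simpa only [sampleMean, smul_eq_mul, ← smul_sum, ← mul_sum] using this

lemma ConvexOn.map_sampleMean_le_sampleMean_succAbove {f : E → ℝ} (hf : ConvexOn ℝ Set.univ f)
    {n : ℕ} (hn : 0 < n) (w : Fin (n + 1) → E) :
    f (sampleMean w) ≤ sampleMean fun j => f (sampleMean fun t => w (j.succAbove t)) := by
  simpa only [sampleMean_sampleMean_succAbove hn] using
    hf.map_sampleMean_le fun j => sampleMean fun t => w (j.succAbove t)

lemma sampleMean_prod {m : ℕ} (w : Fin m → ℝ × ℝ) :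
    sampleMean w = ((∑ i, (w i).1) / m, (∑ i, (w i).2) / m) := by
  ext <;> simp [sampleMean, Prod.fst_sum, Prod.snd_sum, div_eq_inv_mul]

end SampleMean

section Integral

variable {α : Type*} [MeasurableSpace α] {μ : Measure α}
  {F : Type*} [NormedAddCommGroup F] [NormedSpace ℝ F]

lemma integrable_sampleMean {m : ℕ} {G : Fin m → α → F} (hG : ∀ j, Integrable (G j) μ) :
    Integrable (fun x => sampleMean fun j => G j x) μ :=
  (integrable_finsetSum _ fun j _ => hG j).smul _

lemma integral_sampleMean {m : ℕ} {G : Fin m → α → F} (hG : ∀ j, Integrable (G j) μ) :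
    ∫ x, sampleMean (fun j => G j x) ∂μ = sampleMean fun j => ∫ x, G j x ∂μ := by
  simp only [sampleMean, integral_smul, integral_finsetSum _ fun j _ => hG j]

lemma MeasureTheory.MeasurePreserving.integral_comp_of_aestronglyMeasurable {β : Type*}
    [MeasurableSpace β] {ν : Measure β} {φ : α → β} (hφ : MeasurePreserving φ μ ν) {g : β → F}
    (hg : AEStronglyMeasurable g ν) : ∫ x, g (φ x) ∂μ = ∫ y, g y ∂ν := by
  rw [← integral_map hφ.measurable.aemeasurable (hφ.map_eq ▸ hg), hφ.map_eq]

end Integral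

lemma measurePreserving_comp_succAbove {α : Type*} [MeasurableSpace α] (μ : Measure α)
    [IsProbabilityMeasure μ] {n : ℕ} (j : Fin (n + 1)) :
    MeasurePreserving (fun w : Fin (n + 1) → α => fun t => w (j.succAbove t))
      (Measure.pi fun _ => μ) (Measure.pi fun _ => μ) :=
  (measurePreserving_snd (μ := μ)).comp (measurePreserving_piFinSuccAbove (fun _ => μ) j)

theorem ConvexOn.integral_map_sampleMean_succ_le {E : Type*} [AddCommGroup E] [Module ℝ E]
    [MeasurableSpace E] (μ : Measure E) [IsProbabilityMeasure μ] {f : E → ℝ}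
    (hf : ConvexOn ℝ Set.univ f) {n : ℕ} (hn : 0 < n)
    (hint_succ : Integrable (fun w : Fin (n + 1) → E => f (sampleMean w)) (Measure.pi fun _ => μ))
    (hint : Integrable (fun w : Fin n → E => f (sampleMean w)) (Measure.pi fun _ => μ)) :
    ∫ w : Fin (n + 1) → E, f (sampleMean w) ∂(Measure.pi fun _ => μ) ≤
      ∫ w : Fin n → E, f (sampleMean w) ∂(Measure.pi fun _ => μ) := by
  set g := fun w : Fin n → E => f (sampleMean w)
  have hdrop (j : Fin (n + 1)) := measurePreserving_comp_succAbove μ j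
  have hint_drop (j : Fin (n + 1)) :
      Integrable (fun w : Fin (n + 1) → E => g fun t => w (j.succAbove t))
        (Measure.pi fun _ => μ) :=
    (hdrop j).integrable_comp_of_integrable hint
  have hintegral_drop (j : Fin (n + 1)) :
      ∫ w : Fin (n + 1) → E, g (fun t => w (j.succAbove t)) ∂(Measure.pi fun _ => μ) =
        ∫ w, g w ∂(Measure.pi fun _ => μ) :=
    (hdrop j).integral_comp_of_aestronglyMeasurable hint.aestronglyMeasurable
  calc ∫ w : Fin (n + 1) → E, f (sampleMean w) ∂(Measure.pi fun _ => μ)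
      ≤ ∫ w : Fin (n + 1) → E, sampleMean (fun j => g fun t => w (j.succAbove t))
          ∂(Measure.pi fun _ => μ) :=
        integral_mono hint_succ (integrable_sampleMean hint_drop)
          (hf.map_sampleMean_le_sampleMean_succAbove hn)
    _ = ∫ w, g w ∂(Measure.pi fun _ => μ) := by
        rw [integral_sampleMean hint_drop]
        simp only [hintegral_drop, sampleMean_const]

/-- one Jensen step: for i.i.d. integrable pairs and a jointly convex
loss `l`, the expected batched risk of size `k` is at most that of size `k-1`. -/
theorem krisk_le_krisk_pred_of_convex
    (D : Measure (ℝ × ℝ)) [IsProbabilityMeasure D]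
    (l : ℝ × ℝ → ℝ) (hl : ConvexOn ℝ Set.univ l)
    (k : ℕ) (hk : 2 ≤ k)
    (hint : ∀ m : ℕ, 0 < m →
      Integrable
        (fun w : Fin m → ℝ × ℝ =>
          l ((∑ i, (w i).1) / m, (∑ i, (w i).2) / m))
        (Measure.pi fun _ : Fin m => D)) :
    (∫ w : Fin k → ℝ × ℝ,
        l ((∑ i, (w i).1) / k, (∑ i, (w i).2) / k)
        ∂(Measure.pi fun _ : Fin k => D)) ≤
    (∫ w : Fin (k - 1) → ℝ × ℝ,
        l ((∑ i, (w i).1) / (k - 1 : ℕ), (∑ i, (w i).2) / (k - 1 : ℕ))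
        ∂(Measure.pi fun _ : Fin (k - 1) => D)) := by
  obtain ⟨n, rfl⟩ : ∃ n, k = n + 1 := ⟨k - 1, by omega⟩
  have hn : 0 < n := by omega
  simp only [← sampleMean_prod] at hint ⊢
  -- `Fin (n + 1 - 1)` is `Fin n` up to reduction of `n + 1 - 1`.
  exact hl.integral_map_sampleMean_succ_le D hn (hint (n + 1) n.succ_pos) (hint n hn)
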